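/- Let n ≥ 3, m ≥ 1, and let X(t) = ∑_{k=0}^{n−1} a_k e^{λ_{m,k}t} P_k be the solution to the semi-discrete polyharmonic flow with λ_{m,k} = −4^m sin^{2m}(πk/n). Define the rescaled polygon Y(t) = e^{−λ_{m,1}t}(X(t) − a_0·(1,…,1)^T). Then Y(t) → a_1 P_1 + a_{n−1} P_{n−1} as t → ∞. -/

import Mathlib

/-!
After the mean `a 0 • P_0` (eigenvalue `λ_{m,0} = 0`) is removed, the rescaled polygon is
`∑_{k ≠ 0} e^{(λ_{m,k} - λ_{m,1}) t} a_k P_k`.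
Since `sin (π k / n) = sin (π (n - k) / n)` and `sin` increases on `[0, π/2]`,
`sin (π k / n)` is minimal among `0 < k < n` exactly at `k = 1` and `k = n - 1`.
So these two exponents vanish, all the others are negative, and their terms decay.
-/

open Complex Real Filter

/-- The discrete Fourier vector P_k. -/
noncomputable def fourierP (n : ℕ) (k : Fin n) : Fin n → ℂ :=
  fun j => Complex.exp (2 * Real.pi * Complex.I / n) ^ ((j : ℕ) * (k : ℕ))

/-- The eigenvalue λ_{m,k} = −4^m sin^{2m}(πk/n). -/
noncomputable def lam (n m k : ℕ) : ℝ := -(4 : ℝ) ^ m * Real.sin (Real.pi * k / n) ^ (2 * m)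

/-- The explicit solution of the planar semi-discrete polyharmonic flow. -/
noncomputable def polySol (n m : ℕ) (a : Fin n → ℂ) (t : ℝ) : Fin n → ℂ :=
  ∑ k : Fin n, (a k * Complex.exp (lam n m k * t)) • fourierP n k

theorem tendsto_sum_exp_mul_smul {ι E : Type*} [AddCommMonoid E] [TopologicalSpace E]
    [ContinuousAdd E] [Module ℝ E] [ContinuousSMul ℝ E] (s : Finset ι) (μ : ι → ℝ)
    (hμ : ∀ k ∈ s, μ k ≤ 0) (v : ι → E) :
    Tendsto (fun t : ℝ => ∑ k ∈ s, Real.exp (μ k * t) • v k) atTop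
      (nhds (∑ k ∈ s with μ k = 0, v k)) := by
  rw [Finset.sum_filter]
  refine tendsto_finsetSum s fun k hk => ?_
  split_ifs with h
  · simp only [h, zero_mul, Real.exp_zero, one_smul, tendsto_const_nhds]
  · have hdecay : Tendsto (fun t => Real.exp (μ k * t)) atTop (nhds 0) :=
      Real.tendsto_exp_atBot.comp <|
        (tendsto_const_mul_atBot_of_neg ((hμ k hk).lt_of_ne h)).mpr tendsto_id
    simpa using hdecay.smul_const (v k)

theorem fin_one_ne_neg_one {n : ℕ} [NeZero n] (hn : 3 ≤ n) : (1 : Fin n) ≠ -1 := by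
  obtain ⟨n, rfl⟩ := Nat.exists_eq_add_one_of_ne_zero (NeZero.ne n)
  rw [Ne, Fin.ext_iff, Fin.coe_neg_one, Fin.val_one', Nat.mod_eq_of_lt (by omega)]
  omega

theorem sin_pi_mul_natSub_div {n k : ℕ} (hk : k ≤ n) :
    Real.sin (π * ↑(n - k) / n) = Real.sin (π * k / n) := by
  rcases Nat.eq_zero_or_pos n with rfl | hn
  · simp
  rw [← Real.sin_pi_sub, Nat.cast_sub hk]
  field_simp
  ring_nf

theorem sin_pi_div_lt_sin_pi_mul_div {n k : ℕ} (h1 : 1 < k) (hk : k + 1 < n) :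
    Real.sin (π / n) < Real.sin (π * k / n) := by
  wlog hhalf : 2 * k ≤ n generalizing k
  · rw [← sin_pi_mul_natSub_div (by omega)]
    exact this (by omega) (by omega) (by omega)
  have hn : (0 : ℝ) < n := by exact_mod_cast (by omega : 0 < n)
  have hk1 : (1 : ℝ) < k := by exact_mod_cast h1
  have hkn : 2 * (k : ℝ) ≤ n := by exact_mod_cast hhalf
  apply Real.sin_lt_sin_of_lt_of_le_pi_div_two
  · have : 0 ≤ π / n := by positivity
    linarith [Real.pi_pos]
  · rw [div_le_div_iff₀ hn two_pos]
    nlinarith [Real.pi_pos]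
  · rw [div_lt_div_iff_of_pos_right hn]
    nlinarith [Real.pi_pos]

theorem lam_zero (n : ℕ) {m : ℕ} (hm : m ≠ 0) : lam n m 0 = 0 := by
  simp [lam, hm]

theorem lam_natSub (n m : ℕ) {k : ℕ} (hk : k ≤ n) : lam n m (n - k) = lam n m k := by
  rw [lam, lam, sin_pi_mul_natSub_div hk]

theorem lam_lt_lam_one {n m k : ℕ} (hm : m ≠ 0) (h1 : 1 < k) (hk : k + 1 < n) :
    lam n m k < lam n m 1 := by
  have hsin := sin_pi_div_lt_sin_pi_mul_div h1 hk
  have hsin_nonneg : 0 ≤ Real.sin (π / n) :=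
    Real.sin_nonneg_of_nonneg_of_le_pi (by positivity)
      (div_le_self Real.pi_pos.le (by exact_mod_cast (by omega : 1 ≤ n)))
  have hpow := pow_lt_pow_left₀ hsin hsin_nonneg (by omega : 2 * m ≠ 0)
  simp only [lam, Nat.cast_one, mul_one]
  nlinarith [pow_pos (by norm_num : (0 : ℝ) < 4) m]

theorem lam_neg_one (n m : ℕ) [NeZero n] : lam n m ((-1 : Fin n) : ℕ) = lam n m 1 := by
  obtain ⟨n, rfl⟩ := Nat.exists_eq_add_one_of_ne_zero (NeZero.ne n)
  rw [Fin.coe_neg_one, ← lam_natSub (n + 1) m (by omega : 1 ≤ n + 1)]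
  simp

theorem lam_lt_lam_one_of_ne {n m : ℕ} [NeZero n] (hm : m ≠ 0) {k : Fin n} (h0 : k ≠ 0)
    (h1 : k ≠ 1) (hneg : k ≠ -1) : lam n m k < lam n m 1 := by
  obtain ⟨n, rfl⟩ := Nat.exists_eq_add_one_of_ne_zero (NeZero.ne n)
  have h0' : (k : ℕ) ≠ 0 := fun h => h0 (Fin.ext h)
  have hneg' : (k : ℕ) ≠ n := fun h => hneg (Fin.ext (by rw [h, Fin.coe_neg_one]))
  have h1' : (k : ℕ) ≠ 1 % (n + 1) := fun h => h1 (Fin.ext (by rw [h, Fin.val_one']))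
  rw [Nat.one_mod_eq_one.mpr (by omega)] at h1'
  exact lam_lt_lam_one hm (by omega) (by omega)

theorem lam_eq_lam_one_iff {n m : ℕ} [NeZero n] (hm : m ≠ 0) {k : Fin n} (h0 : k ≠ 0) :
    lam n m k = lam n m 1 ↔ k = 1 ∨ k = -1 := by
  refine ⟨fun h => ?_, ?_⟩
  · by_contra! hk
    exact (lam_lt_lam_one_of_ne hm h0 hk.1 hk.2).ne h
  · rintro (rfl | rfl)
    · rw [Fin.val_one', Nat.one_mod_eq_one.mpr]
      rintro rfl
      exact h0 (Subsingleton.elim _ _)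
    · exact lam_neg_one n m

theorem lam_le_lam_one {n m : ℕ} [NeZero n] (hm : m ≠ 0) {k : Fin n} (h0 : k ≠ 0) :
    lam n m k ≤ lam n m 1 := by
  by_cases hk : k = 1 ∨ k = -1
  · exact ((lam_eq_lam_one_iff hm h0).mpr hk).le
  · push Not at hk
    exact (lam_lt_lam_one_of_ne hm h0 hk.1 hk.2).le

theorem filter_lam_eq_lam_one {n m : ℕ} [NeZero n] (hn : 3 ≤ n) (hm : m ≠ 0) :
    (Finset.univ.erase (0 : Fin n)).filter (fun k : Fin n => lam n m k = lam n m 1) =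
      {1, -1} := by
  obtain ⟨n, rfl⟩ := Nat.exists_eq_add_one_of_ne_zero (NeZero.ne n)
  have hone : ((1 : Fin (n + 1)) : ℕ) = 1 := by rw [Fin.val_one', Nat.mod_eq_of_lt (by omega)]
  ext k
  simp only [Finset.mem_filter, Finset.mem_erase, Finset.mem_univ, and_true,
    Finset.mem_insert, Finset.mem_singleton]
  refine ⟨fun ⟨h0, h⟩ => (lam_eq_lam_one_iff hm h0).mp h, fun hk => ?_⟩
  have h0 : k ≠ 0 := by
    rcases hk with rfl | rfl
    · rw [Ne, Fin.ext_iff, hone, Fin.val_zero]; omega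
    · rw [Ne, Fin.ext_iff, Fin.coe_neg_one, Fin.val_zero]; omega
  exact ⟨h0, (lam_eq_lam_one_iff hm h0).mpr hk⟩

theorem polySol_eq_sum_exp_smul (n m : ℕ) (a : Fin n → ℂ) (t : ℝ) :
    polySol n m a t = ∑ k : Fin n, Real.exp (lam n m k * t) • (a k • fourierP n k) := by
  refine Finset.sum_congr rfl fun k _ => ?_
  rw [← smul_assoc, Complex.real_smul, Complex.ofReal_exp, Complex.ofReal_mul, mul_comm]

theorem exp_smul_polySol_sub (n : ℕ) [NeZero n] {m : ℕ} (hm : m ≠ 0) (a : Fin n → ℂ)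
    (c t : ℝ) :
    Real.exp (-c * t) • (polySol n m a t - a 0 • fourierP n 0) =
      ∑ k ∈ Finset.univ.erase (0 : Fin n),
        Real.exp ((lam n m k - c) * t) • (a k • fourierP n k) := by
  rw [polySol_eq_sum_exp_smul, ← Finset.add_sum_erase _ _ (Finset.mem_univ 0)]
  simp only [Fin.val_zero, lam_zero n hm, zero_mul, Real.exp_zero, one_smul,
    add_sub_cancel_left, Finset.smul_sum, smul_smul, ← Real.exp_add]
  congr! 3
  ring

theorem rescaled_flow_limit (n m : ℕ) [NeZero n] (hn : 3 ≤ n) (hm : 1 ≤ m)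
    (a : Fin n → ℂ) :
    Tendsto (fun t : ℝ =>
        Real.exp (-(lam n m 1) * t) • (polySol n m a t - a 0 • fourierP n 0))
      atTop (nhds (a 1 • fourierP n 1 + a (-1) • fourierP n (-1))) := by
  have hm : m ≠ 0 := by omega
  have hle : ∀ k ∈ Finset.univ.erase (0 : Fin n), lam n m k - lam n m 1 ≤ 0 := fun k hk =>
    sub_nonpos.mpr (lam_le_lam_one hm (Finset.ne_of_mem_erase hk))
  have hlim := tendsto_sum_exp_mul_smul _ _ hle fun k => a k • fourierP n k
  simp only [sub_eq_zero, filter_lam_eq_lam_one hn hm,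
    Finset.sum_pair (fin_one_ne_neg_one hn)] at hlim
  simpa only [exp_smul_polySol_sub n hm] using hlim
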